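/- Nonexistence for the one-dimensional stationary problem with large negative right-hand side: let m > 1, C > 0 and R > 0. If η : (−R,R) → ℝ is twice differentiable and satisfies −η''(x) + |η'(x)|^m = −C^m for all x ∈ (−R,R), then C^{m−1} · R ≤ ∫_{−∞}^{+∞} ds/(|s|^m + 1). In particular, if C^{m−1} > (1/R) ∫_{−∞}^{+∞} ds/(|s|^m + 1), the equation −η'' + |η'|^m = −C^m has no twice differentiable solution on (−R,R). -/
import Mathlib


open Set Filter Topology Metric MeasureTheory

noncomputable section

/-- Euclidean space `ℝ^N`. -/
abbrev Euc (N : ℕ) : Type := EuclideanSpace ℝ (Fin N)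

/-- The Laplacian of `φ` at `x`, computed as the trace of the second derivative
in the standard orthonormal basis of `ℝ^N`. -/
noncomputable def lapl {N : ℕ} (φ : Euc N → ℝ) (x : Euc N) : ℝ :=
  ∑ i : Fin N,
    iteratedFDeriv ℝ 2 φ x ![EuclideanSpace.single i 1, EuclideanSpace.single i 1]

/-- `Ω` is a domain with `C²` boundary: it is the sublevel set of a `C²`
defining function whose gradient does not vanish on the boundary. -/
def HasC2Boundary {N : ℕ} (Ω : Set (Euc N)) : Prop :=
  ∃ ρ : Euc N → ℝ, ContDiff ℝ 2 ρ ∧ Ω = {x | ρ x < 0} ∧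
    frontier Ω = {x | ρ x = 0} ∧ ∀ x ∈ frontier Ω, gradient ρ x ≠ 0

/-- The stationary operator `−Δφ(x) + |Dφ(x)|^m + λ r − h(x)` evaluated with the
value `r` of the (sub/super)solution at `x`. -/
noncomputable def statOp {N : ℕ} (h : Euc N → ℝ) (lam m : ℝ)
    (φ : Euc N → ℝ) (r : ℝ) (x : Euc N) : ℝ :=
  -lapl φ x + ‖gradient φ x‖ ^ m + lam * r - h x

/-- Viscosity subsolution of the generalized Dirichlet problem
`S(Ω,h,k,λ)`: `−Δw + |Dw|^m + λ w = h` in `Ω`, `w = k` on `∂Ω`. -/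
def IsStatSub {N : ℕ} (Ω : Set (Euc N)) (h k : Euc N → ℝ) (lam m : ℝ)
    (u : Euc N → ℝ) : Prop :=
  UpperSemicontinuousOn u (closure Ω) ∧
  ∀ φ : Euc N → ℝ, ContDiff ℝ 2 φ → ∀ x₀ ∈ closure Ω,
    IsLocalMaxOn (u - φ) (closure Ω) x₀ →
      (x₀ ∈ Ω → statOp h lam m φ (u x₀) x₀ ≤ 0) ∧
      (x₀ ∈ frontier Ω → min (statOp h lam m φ (u x₀) x₀) (u x₀ - k x₀) ≤ 0)

/-- Viscosity supersolution of the generalized Dirichlet problem `S(Ω,h,k,λ)`. -/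
def IsStatSuper {N : ℕ} (Ω : Set (Euc N)) (h k : Euc N → ℝ) (lam m : ℝ)
    (v : Euc N → ℝ) : Prop :=
  LowerSemicontinuousOn v (closure Ω) ∧
  ∀ φ : Euc N → ℝ, ContDiff ℝ 2 φ → ∀ x₀ ∈ closure Ω,
    IsLocalMinOn (v - φ) (closure Ω) x₀ →
      (x₀ ∈ Ω → 0 ≤ statOp h lam m φ (v x₀) x₀) ∧
      (x₀ ∈ frontier Ω → 0 ≤ max (statOp h lam m φ (v x₀) x₀) (v x₀ - k x₀))

/-- The parabolic operator
`φ_t(x,t) − Δφ(·,t)(x) + |Dφ(·,t)(x)|^m + λ r − f(x)`. -/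
noncomputable def parOp {N : ℕ} (f : Euc N → ℝ) (lam m : ℝ)
    (φ : Euc N × ℝ → ℝ) (r : ℝ) (x : Euc N) (t : ℝ) : ℝ :=
  deriv (fun s => φ (x, s)) t - lapl (fun y => φ (y, t)) x
    + ‖gradient (fun y => φ (y, t)) x‖ ^ m + lam * r - f x

/-- Viscosity subsolution of the generalized initial-boundary value problem
`E(Ω,f,g,u₀,λ)` on the time interval `[0,T]`:
`u_t − Δu + |Du|^m + λ u = f` in `Ω × (0,T]`, `u = g` on `∂Ω × (0,T]`,
`u(·,0) = u₀` on `closure Ω`. -/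
def IsParSub {N : ℕ} (Ω : Set (Euc N)) (f g u₀ : Euc N → ℝ) (lam m T : ℝ)
    (u : Euc N → ℝ → ℝ) : Prop :=
  UpperSemicontinuousOn (fun p : Euc N × ℝ => u p.1 p.2) (closure Ω ×ˢ Ico 0 T) ∧
  (∀ x ∈ closure Ω, u x 0 ≤ u₀ x) ∧
  ∀ φ : Euc N × ℝ → ℝ, ContDiff ℝ 2 φ → ∀ x₀ : Euc N, ∀ t₀ : ℝ,
    (x₀, t₀) ∈ closure Ω ×ˢ Ioc 0 T →
    IsLocalMaxOn (fun p : Euc N × ℝ => u p.1 p.2 - φ p) (closure Ω ×ˢ Ioc 0 T) (x₀, t₀) →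
      (x₀ ∈ Ω → parOp f lam m φ (u x₀ t₀) x₀ t₀ ≤ 0) ∧
      (x₀ ∈ frontier Ω →
        min (parOp f lam m φ (u x₀ t₀) x₀ t₀) (u x₀ t₀ - g x₀) ≤ 0)

/-- Viscosity supersolution of `E(Ω,f,g,u₀,λ)` on the time interval `[0,T]`. -/
def IsParSuper {N : ℕ} (Ω : Set (Euc N)) (f g u₀ : Euc N → ℝ) (lam m T : ℝ)
    (v : Euc N → ℝ → ℝ) : Prop :=
  LowerSemicontinuousOn (fun p : Euc N × ℝ => v p.1 p.2) (closure Ω ×ˢ Icc 0 T) ∧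
  (∀ x ∈ closure Ω, u₀ x ≤ v x 0) ∧
  ∀ φ : Euc N × ℝ → ℝ, ContDiff ℝ 2 φ → ∀ x₀ : Euc N, ∀ t₀ : ℝ,
    (x₀, t₀) ∈ closure Ω ×ˢ Ioc 0 T →
    IsLocalMinOn (fun p : Euc N × ℝ => v p.1 p.2 - φ p) (closure Ω ×ˢ Ioc 0 T) (x₀, t₀) →
      (x₀ ∈ Ω → 0 ≤ parOp f lam m φ (v x₀ t₀) x₀ t₀) ∧
      (x₀ ∈ frontier Ω →
        0 ≤ max (parOp f lam m φ (v x₀ t₀) x₀ t₀) (v x₀ t₀ - g x₀))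

/-- A continuous viscosity solution, global in time, of `E(Ω,f,g,u₀,λ)`. -/
def IsGlobalParSol {N : ℕ} (Ω : Set (Euc N)) (f g u₀ : Euc N → ℝ) (lam m : ℝ)
    (u : Euc N → ℝ → ℝ) : Prop :=
  ContinuousOn (fun p : Euc N × ℝ => u p.1 p.2) (closure Ω ×ˢ Ici 0) ∧
  ∀ T > (0 : ℝ), IsParSub Ω f g u₀ lam m T u ∧ IsParSuper Ω f g u₀ lam m T u

open scoped Classical in
/-- Redefinition of a parabolic subsolution on the lateral boundary by its
`limsup` from inside `Ω × (0,T]`. -/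
noncomputable def uscExtPar {N : ℕ} (Ω : Set (Euc N)) (T : ℝ)
    (u : Euc N → ℝ → ℝ) : Euc N → ℝ → ℝ :=
  fun z t => if z ∈ Ω then u z t
    else limsup (fun p : Euc N × ℝ => u p.1 p.2) (𝓝[Ω ×ˢ Ioc 0 T] (z, t))

open scoped Classical in
/-- Redefinition of a stationary subsolution on the boundary by its `limsup`
from inside `Ω`. -/
noncomputable def uscExtStat {N : ℕ} (Ω : Set (Euc N))
    (u : Euc N → ℝ) : Euc N → ℝ :=
  fun z => if z ∈ Ω then u z else limsup u (𝓝[Ω] z)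

/-- Continuous viscosity solution of the state constraint problem
`−Δw + |Dw|^m + λ w = h` in `Ω`, `−Δw + |Dw|^m + λ w ≥ h` on `∂Ω`. -/
def IsSCSolution {N : ℕ} (Ω : Set (Euc N)) (h : Euc N → ℝ) (lam m : ℝ)
    (w : Euc N → ℝ) : Prop :=
  ContinuousOn w (closure Ω) ∧
  (∀ φ : Euc N → ℝ, ContDiff ℝ 2 φ → ∀ x₀ ∈ Ω, IsLocalMaxOn (w - φ) Ω x₀ →
      statOp h lam m φ (w x₀) x₀ ≤ 0) ∧
  (∀ φ : Euc N → ℝ, ContDiff ℝ 2 φ → ∀ x₀ ∈ closure Ω,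
      IsLocalMinOn (w - φ) (closure Ω) x₀ → 0 ≤ statOp h lam m φ (w x₀) x₀)

/-- Continuous viscosity subsolution of `−Δu + |Du|^m ≤ h` in `Ω`
(no boundary condition). -/
def IsIntSub {N : ℕ} (Ω : Set (Euc N)) (h : Euc N → ℝ) (m : ℝ)
    (u : Euc N → ℝ) : Prop :=
  ∀ φ : Euc N → ℝ, ContDiff ℝ 2 φ → ∀ x₀ ∈ Ω, IsLocalMaxOn (u - φ) Ω x₀ →
    statOp h 0 m φ (u x₀) x₀ ≤ 0

/-- Hölder continuity with exponent `α` on a set. -/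
def HolderOnCl {N : ℕ} (α : ℝ) (s : Set (Euc N)) (w : Euc N → ℝ) : Prop :=
  ∃ C > (0 : ℝ), ∀ x ∈ s, ∀ y ∈ s, |w x - w y| ≤ C * ‖x - y‖ ^ α

/-- Local Lipschitz continuity inside `Ω`. -/
def LocLipIn {N : ℕ} (Ω : Set (Euc N)) (w : Euc N → ℝ) : Prop :=
  ∀ x ∈ Ω, ∃ ε > (0 : ℝ), ∃ K : ℝ, 0 ≤ K ∧
    ∀ y ∈ ball x ε ∩ Ω, ∀ z ∈ ball x ε ∩ Ω, |w y - w z| ≤ K * ‖y - z‖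

/-- A piecewise `C¹` path parametrized on `[0,1]`. -/
def IsPWC1Path {N : ℕ} (γ : ℝ → Euc N) : Prop :=
  ContinuousOn γ (Icc 0 1) ∧
  ∃ n : ℕ, ∃ τ : Fin (n + 1) → ℝ, StrictMono τ ∧ τ 0 = 0 ∧ τ (Fin.last n) = 1 ∧
    ∀ i : Fin n, ContDiffOn ℝ 1 γ (Icc (τ i.castSucc) (τ i.succ))

/-- The length of a path on `[0,1]`. -/
noncomputable def pathLen {N : ℕ} (γ : ℝ → Euc N) : ℝ :=
  ∫ t in (0 : ℝ)..1, ‖derivWithin γ (Icc (0 : ℝ) 1) t‖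

/-- The geodesic-type distance inside `closure S` via piecewise `C¹` paths. -/
noncomputable def dTilde {N : ℕ} (S : Set (Euc N)) (x y : Euc N) : ℝ :=
  sInf {L : ℝ | ∃ γ : ℝ → Euc N, IsPWC1Path γ ∧ γ 0 = x ∧ γ 1 = y ∧
    MapsTo γ (Icc 0 1) (closure S) ∧ L = pathLen γ}

/-- The inner parallel set `Ω_δ = {x ∈ Ω : dist(x,∂Ω) > δ}`. -/
def innerSet {N : ℕ} (Ω : Set (Euc N)) (δ : ℝ) : Set (Euc N) :=
  {x ∈ Ω | δ < infDist x (frontier Ω)}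

end


section Stmt7Aux

lemma stmt7_cont {m c : ℝ} (hm : 0 ≤ m) (hc : 0 < c) :
    Continuous fun s : ℝ => (|s| ^ m + c)⁻¹ := by
  have hpos : ∀ s : ℝ, |s| ^ m + c ≠ 0 := fun s =>
    (add_pos_of_nonneg_of_pos (Real.rpow_nonneg (abs_nonneg s) m) hc).ne'
  exact ((continuous_abs.rpow_const fun x => Or.inr hm).add continuous_const).inv₀ hpos

lemma stmt7_integrable {m c : ℝ} (hm : 1 < m) (hc : 0 < c) :
    MeasureTheory.Integrable fun s : ℝ => (|s| ^ m + c)⁻¹ := by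
  have hm0 : (0:ℝ) ≤ m := by linarith
  have hcont := stmt7_cont hm0 hc
  have hIoi : MeasureTheory.IntegrableOn (fun s : ℝ => (|s| ^ m + c)⁻¹) (Set.Ioi 1) := by
    have hg : MeasureTheory.IntegrableOn (fun x : ℝ => x ^ (-m)) (Set.Ioi 1) :=
      (integrableOn_Ioi_rpow_iff zero_lt_one).mpr (by linarith)
    refine MeasureTheory.Integrable.mono' hg hcont.aestronglyMeasurable.restrict ?_
    filter_upwards [MeasureTheory.ae_restrict_mem measurableSet_Ioi] with x hx
    have hx0 : (0:ℝ) < x := lt_trans zero_lt_one hx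
    have hxm : 0 < x ^ m := Real.rpow_pos_of_pos hx0 m
    rw [Real.norm_eq_abs, abs_of_nonneg
      (inv_nonneg.mpr (add_pos_of_nonneg_of_pos (Real.rpow_nonneg (abs_nonneg x) m) hc).le),
      Real.rpow_neg hx0.le, abs_of_pos hx0]
    apply inv_anti₀ hxm
    linarith
  have hIci : MeasureTheory.IntegrableOn (fun s : ℝ => (|s| ^ m + c)⁻¹) (Set.Ici 0) := by
    have h01 : MeasureTheory.IntegrableOn (fun s : ℝ => (|s| ^ m + c)⁻¹) (Set.Icc 0 1) :=
      hcont.integrableOn_Icc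
    have hu : Set.Ici (0:ℝ) = Set.Icc 0 1 ∪ Set.Ioi 1 := (Set.Icc_union_Ioi_eq_Ici zero_le_one).symm
    rw [hu]
    exact h01.union hIoi
  have hIio : MeasureTheory.IntegrableOn (fun s : ℝ => (|s| ^ m + c)⁻¹) (Set.Iio 0) := by
    rw [← (MeasureTheory.Measure.measurePreserving_neg
        (MeasureTheory.volume : MeasureTheory.Measure ℝ)).integrableOn_comp_preimage
        (Homeomorph.neg ℝ).measurableEmbedding]
    simp only [Function.comp_def, abs_neg, Set.neg_preimage, Set.neg_Iio, neg_zero]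
    exact hIci.mono_set Set.Ioi_subset_Ici_self
  rw [← MeasureTheory.integrableOn_univ, ← Set.Iio_union_Ici (a := (0:ℝ))]
  exact hIio.union hIci

lemma stmt7_interval_le {f : ℝ → ℝ} (hf : MeasureTheory.Integrable f)
    (h0 : ∀ x, 0 ≤ f x) (u v : ℝ) :
    ∫ x in u..v, f x ≤ ∫ x, f x := by
  rcases le_total u v with h | h
  · rw [intervalIntegral.integral_of_le h]
    exact MeasureTheory.setIntegral_le_integral hf (Filter.Eventually.of_forall h0)
  · rw [intervalIntegral.integral_of_ge h]
    have h1 : 0 ≤ ∫ x, f x := MeasureTheory.integral_nonneg h0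
    have h2 : 0 ≤ ∫ x in Set.Ioc v u, f x :=
      MeasureTheory.setIntegral_nonneg measurableSet_Ioc fun x _ => h0 x
    linarith

end Stmt7Aux

/-- Nonexistence for the one-dimensional stationary problem
with large negative right-hand side, Section 2.4 of the paper. -/
theorem stmt7 (m C R : ℝ) (hm : 1 < m) (hC : 0 < C) (hR : 0 < R) :
    (∀ η η' η'' : ℝ → ℝ,
      (∀ x ∈ Set.Ioo (-R) R, HasDerivAt η (η' x) x) →
      (∀ x ∈ Set.Ioo (-R) R, HasDerivAt η' (η'' x) x) →
      (∀ x ∈ Set.Ioo (-R) R, -η'' x + |η' x| ^ m = -(C ^ m)) →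
      C ^ (m - 1) * R ≤ ∫ s : ℝ, 1 / (|s| ^ m + 1)) ∧
    (C ^ (m - 1) > (1 / R) * ∫ s : ℝ, 1 / (|s| ^ m + 1) →
      ¬∃ η η' η'' : ℝ → ℝ,
        (∀ x ∈ Set.Ioo (-R) R, HasDerivAt η (η' x) x) ∧
        (∀ x ∈ Set.Ioo (-R) R, HasDerivAt η' (η'' x) x) ∧
        (∀ x ∈ Set.Ioo (-R) R, -η'' x + |η' x| ^ m = -(C ^ m))) := by
  have hm0 : (0:ℝ) < m := lt_trans zero_lt_one hm
  have hCm : 0 < C ^ m := Real.rpow_pos_of_pos hC m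
  set I : ℝ := ∫ s : ℝ, 1 / (|s| ^ m + 1) with hI
  have key : ∀ η η' η'' : ℝ → ℝ,
      (∀ x ∈ Set.Ioo (-R) R, HasDerivAt η (η' x) x) →
      (∀ x ∈ Set.Ioo (-R) R, HasDerivAt η' (η'' x) x) →
      (∀ x ∈ Set.Ioo (-R) R, -η'' x + |η' x| ^ m = -(C ^ m)) →
      C ^ (m - 1) * R ≤ I := by
    intro η η' η'' hd1 hd2 heq
    set f : ℝ → ℝ := fun s => (|s| ^ m + C ^ m)⁻¹ with hf
    have hfc : Continuous f := stmt7_cont hm0.le hCm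
    have hfi : MeasureTheory.Integrable f := stmt7_integrable hm hCm
    have hfpos : ∀ s, 0 < |s| ^ m + C ^ m := fun s =>
      add_pos_of_nonneg_of_pos (Real.rpow_nonneg (abs_nonneg s) m) hCm
    have hfnn : ∀ s, 0 ≤ f s := fun s => inv_nonneg.mpr (hfpos s).le
    set F : ℝ → ℝ := fun t => ∫ τ in (0:ℝ)..t, f τ with hF
    have hFd : ∀ t, HasDerivAt F (f t) t := fun t =>
      (hfc.integral_hasStrictDerivAt 0 t).hasDerivAt
    set G : ℝ → ℝ := fun x => F (η' x) with hG
    have hGd : ∀ x ∈ Set.Ioo (-R) R, HasDerivAt G 1 x := by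
      intro x hx
      have h := (hFd (η' x)).comp x (hd2 x hx)
      have he : f (η' x) * η'' x = 1 := by
        have hxeq := heq x hx
        have h2 : η'' x = |η' x| ^ m + C ^ m := by linarith
        rw [h2, hf]
        exact inv_mul_cancel₀ (hfpos (η' x)).ne'
      rwa [he] at h
    have hsub : Set.Icc (-(R/2)) (R/2) ⊆ Set.Ioo (-R) R := by
      intro x hx
      exact ⟨by linarith [hx.1], by linarith [hx.2]⟩
    have hab : -(R/2) < R/2 := by linarith
    have hGc : ContinuousOn G (Set.Icc (-(R/2)) (R/2)) := fun x hx =>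
      (hGd x (hsub hx)).continuousAt.continuousWithinAt
    obtain ⟨c, hc, hceq⟩ := exists_hasDerivAt_eq_slope G (fun _ => 1) hab hGc
      (fun x hx => hGd x (hsub (Set.Ioo_subset_Icc_self hx)))
    have hRne : (R/2 - -(R/2)) ≠ 0 := by linarith
    have hGdiff : G (R/2) - G (-(R/2)) = R := by
      have hd : R/2 - -(R/2) = R := by ring
      rw [hd, eq_div_iff hR.ne'] at hceq
      linarith
    have hFF : G (R/2) - G (-(R/2)) = ∫ τ in (η' (-(R/2)))..(η' (R/2)), f τ := by
      rw [hG]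
      exact intervalIntegral.integral_interval_sub_left
        hfi.intervalIntegrable hfi.intervalIntegrable
    have hRle : R ≤ ∫ τ : ℝ, f τ := by
      have := stmt7_interval_le hfi hfnn (η' (-(R/2))) (η' (R/2))
      rw [← hFF, hGdiff] at this
      exact this
    have hscale : (∫ τ : ℝ, f τ) = C ^ (1 - m) * I := by
      have h1 : ∀ s : ℝ, f (C * s) = C ^ (-m) * (1 / (|s| ^ m + 1)) := by
        intro s
        rw [hf]
        simp only
        rw [abs_mul, abs_of_pos hC, Real.mul_rpow hC.le (abs_nonneg s), Real.rpow_neg hC.le,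
          one_div, ← mul_inv]
        congr 1
        ring
      have h2 := MeasureTheory.Measure.integral_comp_mul_left f C
      simp only [h1] at h2
      rw [MeasureTheory.integral_const_mul, abs_of_pos (inv_pos.mpr hC), smul_eq_mul] at h2
      have h3 : (∫ τ : ℝ, f τ) = C * (C ^ (-m) * I) := by
        rw [← hI] at h2
        field_simp at h2 ⊢
        linarith [h2]
      rw [h3, Real.rpow_sub hC, Real.rpow_one, Real.rpow_neg hC.le]
      ring
    have hCm1 : 0 < C ^ (m - 1) := Real.rpow_pos_of_pos hC _
    have hmul : C ^ (m - 1) * C ^ (1 - m) = 1 := by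
      rw [← Real.rpow_add hC]
      norm_num
    calc C ^ (m - 1) * R ≤ C ^ (m - 1) * (C ^ (1 - m) * I) := by
          rw [← hscale]
          exact mul_le_mul_of_nonneg_left hRle hCm1.le
      _ = I := by rw [← mul_assoc, hmul, one_mul]
  refine ⟨key, ?_⟩
  rintro hgt ⟨η, η', η'', h1, h2, h3⟩
  have hle := key η η' η'' h1 h2 h3
  have hmulR : (1 / R) * I * R = I := by field_simp
  nlinarith [mul_lt_mul_of_pos_right hgt hR]
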